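/- For w ∈ I(θ) and s ∈ S, ℓ(ws) < ℓ(w) if and only if ℓ(w·s̲) < ℓ(w), where ℓ is the Coxeter length and w·s̲ is the twisted action. -/

import Mathlib

/-- `θ` maps simple reflections to simple reflections. -/
def PreservesSimples {B W : Type*} [Group W] {M : CoxeterMatrix B}
    (cs : CoxeterSystem M W) (θ : W ≃* W) : Prop :=
  ∀ i : B, ∃ j : B, θ (cs.simple i) = cs.simple j

open Classical in
/-- The twisted action `w · s̲`. -/
noncomputable def twMul {B W : Type*} [Group W] {M : CoxeterMatrix B}
    (cs : CoxeterSystem M W) (θ : W ≃* W) (w : W) (i : B) : W :=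
  if θ (cs.simple i) * w * cs.simple i = w then w * cs.simple i
  else θ (cs.simple i) * w * cs.simple i

/-- Action of a word of symbols. -/
noncomputable def twWord {B W : Type*} [Group W] {M : CoxeterMatrix B}
    (cs : CoxeterSystem M W) (θ : W ≃* W) (w : W) (l : List B) : W :=
  l.foldl (twMul cs θ) w

/-!
If `θ(s) w s = w` there is nothing to prove. Otherwise `θ(s) w = θ((w s)⁻¹)`, and `θ` preserves
length, so `θ(s)` is a left descent of `w` exactly when `s` is a right descent. If both are
descents, the lifting property (for a left descent `s'` and a right descent `s` of `w` with
`s' w s ≠ w`, `ℓ(s' w s) ≤ ℓ(w) - 2`) shows `ℓ(θ(s) w s) < ℓ(w)`; if neither is,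
`ℓ(θ(s) w s) ≥ ℓ(θ(s) w) - 1 = ℓ(w)`.

The lifting property follows from the exchange condition, which we get from the reflection cocycle
of Björner–Brenti: `s_i` acts on `W × ZMod 2` by `(t, ε) ↦ (s_i t s_i, ε + [t = s_i])`. These
involutions satisfy the Coxeter relations, so the parity of the number of occurrences of `t` in the
left inversion sequence of a word depends only on the product of the word.
-/

namespace CoxeterSystem

open List

variable {B W : Type*} [Group W] {M : CoxeterMatrix B} (cs : CoxeterSystem M W)

local prefix:100 "s" => cs.simple
local prefix:100 "π" => cs.wordProd
local prefix:100 "ℓ" => cs.length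
local prefix:100 "lis" => cs.leftInvSeq

theorem prod_map_alternatingWord_two_mul {G : Type*} [Monoid G] (f : B → G) (i i' : B) (m : ℕ) :
    ((alternatingWord i i' (2 * m)).map f).prod = (f i * f i') ^ m := by
  induction m with
  | zero => simp [alternatingWord]
  | succ m ih =>
    have hodd : ¬Even (2 * m + 1) := Nat.not_even_two_mul_add_one m
    rw [mul_add_one, alternatingWord_succ', alternatingWord_succ', if_neg hodd,
      if_pos (even_two_mul m), map_cons, map_cons, prod_cons, prod_cons, ih, pow_succ', mul_assoc]

theorem leftInvSeq_alternatingWord_two_mul (i i' : B) (p : ℕ) :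
    lis (alternatingWord i i' (2 * p)) =
      (range (2 * p)).map fun k ↦ π (alternatingWord i' i (2 * k + 1)) := by
  refine ext_getElem (by simp) fun k hk _ ↦ ?_
  rw [getElem_map, getElem_range]
  exact cs.getElem_leftInvSeq_alternatingWord i i' p k (by simpa using hk)

theorem even_count_map_range_two_mul {α : Type*} [BEq α] [LawfulBEq α] {f : ℕ → α} {p : ℕ}
    (hf : Function.Periodic f p) (a : α) : Even (((range (2 * p)).map f).count a) := by
  have hshift : (fun k ↦ f (p + k)) = f := funext fun k ↦ by rw [add_comm, hf]
  rw [two_mul, range_add, map_append, count_append, map_map, Function.comp_def, hshift]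
  exact Even.add_self _

theorem simple_mul_mul_simple_eq_simple_iff (i : B) (t : W) : s i * t * s i = s i ↔ t = s i := by
  rw [mul_eq_right, mul_eq_one_iff_inv_eq, inv_simple, eq_comm]

section ReflectionCocycle

variable [DecidableEq W]

theorem even_count_leftInvSeq_alternatingWord (i i' : B) (t : W) :
    Even ((lis (alternatingWord i i' (2 * M i i'))).count t) := by
  rw [leftInvSeq_alternatingWord_two_mul]
  refine even_count_map_range_two_mul (fun k ↦ ?_) t
  simp only [prod_alternatingWord_eq_mul_pow, Nat.not_even_two_mul_add_one, if_false]
  rw [show (2 * (k + M i i') + 1) / 2 = k + M i i' by omega,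
    show (2 * k + 1) / 2 = k by omega, pow_add, simple_mul_simple_pow', mul_one]

theorem count_leftInvSeq_cons (i : B) (ω : List B) (t : W) :
    (lis (i :: ω)).count (s i * t * s i) = (lis ω).count t + if t = s i then 1 else 0 := by
  have hconj : s i * t * s i = MulAut.conj (s i) t := by simp
  rw [leftInvSeq, count_cons, hconj, count_map_of_injective _ _ (MulAut.conj (s i)).injective]
  simp only [← hconj, beq_iff_eq, @eq_comm _ (s i), simple_mul_mul_simple_eq_simple_iff]

def reflectionPermFun (i : B) (p : W × ZMod 2) : W × ZMod 2 :=
  (s i * p.1 * s i, p.2 + if p.1 = s i then 1 else 0)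

theorem reflectionPermFun_involutive (i : B) : Function.Involutive (cs.reflectionPermFun i) := by
  rintro ⟨t, ε⟩
  have hconj : s i * (s i * t * s i) * s i = t := by
    simp only [mul_assoc, simple_mul_simple_self, mul_one, simple_mul_simple_cancel_left]
  simp only [reflectionPermFun, hconj, simple_mul_mul_simple_eq_simple_iff, add_assoc,
    CharTwo.add_self_eq_zero, add_zero]

def reflectionPerm (i : B) : Equiv.Perm (W × ZMod 2) :=
  (cs.reflectionPermFun_involutive i).toPerm

theorem prod_map_reflectionPerm (ω : List B) (p : W × ZMod 2) :
    (ω.map cs.reflectionPerm).prod p =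
      (π ω * p.1 * (π ω)⁻¹, p.2 + ((lis ω).count (π ω * p.1 * (π ω)⁻¹) : ZMod 2)) := by
  induction ω generalizing p with
  | nil => simp
  | cons i ω ih =>
    have hπ : π (i :: ω) * p.1 * (π (i :: ω))⁻¹ = s i * (π ω * p.1 * (π ω)⁻¹) * s i := by
      simp only [wordProd_cons, mul_inv_rev, inv_simple, mul_assoc]
    rw [map_cons, prod_cons, Equiv.Perm.mul_apply, ih, hπ]
    simp only [reflectionPerm, Function.Involutive.coe_toPerm, reflectionPermFun,
      count_leftInvSeq_cons]
    push_cast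
    rw [add_assoc]

theorem isLiftable_reflectionPerm : M.IsLiftable cs.reflectionPerm := by
  intro i i'
  rw [← prod_map_alternatingWord_two_mul]
  refine Equiv.ext fun p ↦ ?_
  have hπ : π (alternatingWord i i' (2 * M i i')) = 1 := by
    rw [prod_alternatingWord_eq_mul_pow, if_pos (even_two_mul _),
      Nat.mul_div_cancel_left _ two_pos, one_mul, simple_mul_simple_pow]
  obtain ⟨n, hn⟩ := cs.even_count_leftInvSeq_alternatingWord i i' p.1
  rw [prod_map_reflectionPerm, hπ, one_mul, inv_one, mul_one, hn, Nat.cast_add,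
    CharTwo.add_self_eq_zero, add_zero, Equiv.Perm.one_apply]

theorem count_leftInvSeq_congr {ω ω' : List B} (h : π ω = π ω') (t : W) :
    ((lis ω).count t : ZMod 2) = (lis ω').count t := by
  let φ := cs.lift ⟨cs.reflectionPerm, cs.isLiftable_reflectionPerm⟩
  have hφ (ω : List B) : φ (π ω) = (ω.map cs.reflectionPerm).prod := by
    simp [φ, wordProd, map_list_prod, Function.comp_def]
  have key := congrArg (fun w ↦ (φ w ((π ω)⁻¹ * t * π ω, 0)).2) h
  simp only [hφ, prod_map_reflectionPerm] at key
  rw [← h] at key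
  simpa [mul_assoc] using key

end ReflectionCocycle

theorem simple_mem_leftInvSeq_of_isLeftDescent {ω : List B} {i : B}
    (hi : cs.IsLeftDescent (π ω) i) : s i ∈ lis ω := by
  classical
  obtain ⟨ω', hω', hπ'⟩ := cs.exists_isReduced (s i * π ω)
  have hnot : s i ∉ lis ω' := fun hmem ↦ by
    have := (cs.isLeftInversion_of_mem_leftInvSeq hω' hmem).2
    rw [← hπ', simple_mul_simple_cancel_left] at this
    exact lt_asymm hi this
  have hcount : (lis (i :: ω')).count (s i) = 1 := by
    simpa [count_eq_zero.2 hnot] using cs.count_leftInvSeq_cons i ω' (s i)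
  have hπ : π ω = π (i :: ω') := by rw [wordProd_cons, ← hπ', simple_mul_simple_cancel_left]
  have hodd := cs.count_leftInvSeq_congr hπ (s i)
  rw [hcount, Nat.cast_one] at hodd
  refine count_pos_iff.1 (Nat.pos_of_ne_zero fun h0 ↦ ?_)
  rw [h0, Nat.cast_zero] at hodd
  exact zero_ne_one hodd

theorem length_simple_mul_mul_simple_add_two_le {w : W} {i j : B} (hj : cs.IsLeftDescent w j)
    (hi : cs.IsRightDescent w i) (hne : s j * w * s i ≠ w) : ℓ (s j * w * s i) + 2 ≤ ℓ w := by
  obtain ⟨ω, hω, hπ⟩ := cs.exists_isReduced (w * s i)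
  have hw : w = π (ω ++ [i]) := by
    rw [wordProd_append, wordProd_singleton, ← hπ, simple_mul_simple_cancel_right]
  have hlen : ℓ w = ω.length + 1 := by
    have := cs.length_mul_simple w i
    unfold IsRightDescent at hi
    rw [hπ, hω.eq] at this hi
    omega
  obtain ⟨k, hk, hget⟩ :=
    mem_iff_getElem.mp (cs.simple_mem_leftInvSeq_of_isLeftDescent (hw ▸ hj))
  have herase : s j * w = π ((ω ++ [i]).eraseIdx k) := by
    rw [← hget, ← getD_eq_getElem _ 1, ← getD_leftInvSeq_mul_wordProd, ← hw]
  rw [length_leftInvSeq, length_append, length_singleton] at hk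
  rcases Nat.lt_succ_iff_lt_or_eq.1 hk with hk | rfl
  · rw [eraseIdx_append_of_lt_length hk, wordProd_append, wordProd_singleton] at herase
    rw [herase, simple_mul_simple_cancel_right, hlen]
    have := cs.length_wordProd_le (ω.eraseIdx k)
    rw [length_eraseIdx_of_lt hk] at this
    omega
  · rw [eraseIdx_append_of_length_le le_rfl, Nat.sub_self, eraseIdx_cons_zero, append_nil,
      ← hπ] at herase
    exact absurd (by rw [herase, simple_mul_simple_cancel_right]) hne

end CoxeterSystem

namespace PreservesSimples

variable {B W : Type*} [Group W] {M : CoxeterMatrix B} {cs : CoxeterSystem M W} {θ : W ≃* W}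

theorem length_apply_le (hS : PreservesSimples cs θ) (w : W) : cs.length (θ w) ≤ cs.length w := by
  choose f hf using hS
  have hθ (ω : List B) : θ (cs.wordProd ω) = cs.wordProd (ω.map f) := by
    induction ω with
    | nil => simp
    | cons i ω ih => rw [List.map_cons, cs.wordProd_cons, cs.wordProd_cons, map_mul, hf, ih]
  obtain ⟨ω, hω, rfl⟩ := cs.exists_isReduced w
  calc cs.length (θ (cs.wordProd ω)) ≤ (ω.map f).length := hθ ω ▸ cs.length_wordProd_le _
    _ = cs.length (cs.wordProd ω) := by rw [List.length_map, hω.eq]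

theorem length_apply (hS : PreservesSimples cs θ) (hinv : ∀ w : W, θ (θ w) = w) (w : W) :
    cs.length (θ w) = cs.length w :=
  (hS.length_apply_le w).antisymm <| by simpa only [hinv] using hS.length_apply_le (θ w)

theorem length_apply_simple_mul_of_apply_eq_inv (hS : PreservesSimples cs θ)
    (hinv : ∀ w : W, θ (θ w) = w) {w : W} (hw : θ w = w⁻¹) (i : B) :
    cs.length (θ (cs.simple i) * w) = cs.length (w * cs.simple i) := by
  have : θ (cs.simple i) * w = θ ((w * cs.simple i)⁻¹) := by
    rw [mul_inv_rev, cs.inv_simple, map_mul, map_inv, hw, inv_inv]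
  rw [this, hS.length_apply hinv, cs.length_inv]

end PreservesSimples

/-- For a twisted involution `w`, `ℓ(ws) < ℓ(w)` iff `ℓ(w · s̲) < ℓ(w)`. -/
theorem stmt_4 {B W : Type*} [Group W] {M : CoxeterMatrix B}
    (cs : CoxeterSystem M W) (θ : W ≃* W)
    (hinv : ∀ w : W, θ (θ w) = w) (hS : PreservesSimples cs θ)
    (w : W) (hw : θ w = w⁻¹) (i : B) :
    cs.length (w * cs.simple i) < cs.length w ↔
      cs.length (twMul cs θ w i) < cs.length w := by
  have hlen := hS.length_apply_simple_mul_of_apply_eq_inv hinv hw i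
  obtain ⟨j, hj⟩ := hS i
  rw [hj] at hlen
  rw [twMul, hj]
  split_ifs with hfix
  · rfl
  constructor
  · intro hright
    have hleft : cs.IsLeftDescent w j := by rwa [CoxeterSystem.IsLeftDescent, hlen]
    have hlift := cs.length_simple_mul_mul_simple_add_two_le hleft hright hfix
    omega
  · intro hlt
    by_contra hright
    have hw_mul := cs.length_mul_simple w i
    have hjw_mul := cs.length_mul_simple (cs.simple j * w) i
    omega
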